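/- Let (W,S) be a Coxeter system with automorphism σ preserving S, and O a σ-conjugacy class satisfying the reduction property (every element of O is connected by →_σ to a minimal length element). Then for w ∈ W: there exists a minimal length element x of O with x ≤ w if and only if there exists any element x ∈ O with x ≤ w. -/

import Mathlib

/-- Bruhat order on a Coxeter group (subword property). -/
def CoxeterSystem.bruhatLE {B W : Type*} [Group W] {M : CoxeterMatrix B}
    (cs : CoxeterSystem M W) (x w : W) : Prop :=
  ∃ ω : List B, cs.wordProd ω = w ∧ cs.IsReduced ω ∧
    ∃ ω' : List B, ω'.Sublist ω ∧ cs.wordProd ω' = x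

/-- One step of length-nonincreasing σ-twisted conjugation by a simple reflection. -/
def CoxeterSystem.sigmaStep {B W : Type*} [Group W] {M : CoxeterMatrix B}
    (cs : CoxeterSystem M W) (σ : W ≃* W) (w w' : W) : Prop :=
  ∃ i : B, w' = cs.simple i * w * σ (cs.simple i) ∧ cs.length w' ≤ cs.length w

def sigmaConj {W : Type*} [Group W] (σ : W ≃* W) (y x : W) : Prop :=
  ∃ g : W, y = g * x * (σ g)⁻¹

/-- `x` is of minimal length in the σ-conjugacy class of `o`. -/
def minLenIn {B W : Type*} [Group W] {M : CoxeterMatrix B} (cs : CoxeterSystem M W)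
    (σ : W ≃* W) (o x : W) : Prop :=
  sigmaConj σ x o ∧ ∀ y : W, sigmaConj σ y o → cs.length x ≤ cs.length y

/-!
Start from `x ∈ O` below `w`, follow a path `x →_σ ⋯ →_σ m` to a minimal length element and
walk back along it, keeping a minimal length element of `O` below the current one. At a step
`a →_σ b`, i.e. `a = s b s'` with `s' = σ(s)` and `ℓ b ≤ ℓ a`, Deodhar's lifting property shows
that each `y ≤ b` satisfies `y ≤ a`, or `s y s' ≤ a` with `ℓ (s y s') ≤ ℓ y`; in the second case
`s y s'` is again a minimal length element of `O`.

The lifting property is easiest for Bruhat order defined by chains of length-increasing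
multiplications by reflections. This order agrees with the subword order by the strong exchange
condition, which comes from Tits' cocycle: a homomorphism from `W` to the permutations of
`W × ZMod 2` counting, modulo 2, the occurrences of a reflection in the right inversion sequence
of any word.
-/

namespace CoxeterSystem

open List

variable {B W : Type*} [Group W] {M : CoxeterMatrix B} (cs : CoxeterSystem M W)

local prefix:100 "s" => cs.simple
local prefix:100 "π" => cs.wordProd
local prefix:100 "ℓ" => cs.length
local prefix:100 "ris" => cs.rightInvSeq

section ReflectionCocycle

open scoped Classical

/-- The action of `s i` in Tits' reflection cocycle. -/
noncomputable def simplePerm (i : B) : Equiv.Perm (W × ZMod 2) :=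
  Function.Involutive.toPerm (fun p ↦ (s i * p.1 * s i, p.2 + if p.1 = s i then 1 else 0)) <| by
    rintro ⟨t, e⟩
    have hconj : s i * t * s i = s i ↔ t = s i := by
      constructor
      · intro h; simpa [mul_assoc, mul_eq_one_iff_eq_inv] using h
      · rintro rfl; simp
    simp only [hconj, Prod.mk.injEq, add_assoc, CharTwo.add_self_eq_zero, add_zero, and_true]
    simp [mul_assoc]

theorem simplePerm_apply (i : B) (t : W) (e : ZMod 2) :
    cs.simplePerm i (t, e) = (s i * t * s i, e + if t = s i then 1 else 0) := rfl

theorem simplePerm_mul_pow_apply (i j : B) (k : ℕ) (t : W) (e : ZMod 2) :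
    ((cs.simplePerm i * cs.simplePerm j) ^ k) (t, e) =
      ((s i * s j) ^ k * t * ((s i * s j) ^ k)⁻¹,
        e + ∑ r ∈ Finset.range (2 * k), if t = (s j * s i) ^ r * s j then 1 else 0) := by
  induction k with
  | zero => simp
  | succ k ih =>
    have hinv : (s i * s j)⁻¹ = s j * s i := by rw [mul_inv_rev, inv_simple, inv_simple]
    have hsemi : s j * (s i * s j) ^ k = (s j * s i) ^ k * s j :=
      (SemiconjBy.pow_right (mul_assoc (s j) (s i) (s j)).symm k).eq
    set q := (s i * s j) ^ k
    have hconj (X : W) : q * t * q⁻¹ = X ↔ t = q⁻¹ * X * q := by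
      constructor <;> rintro rfl <;> group
    have hq : q⁻¹ = (s j * s i) ^ k := by rw [← hinv, inv_pow]
    rw [pow_succ', Equiv.Perm.mul_apply, ih, Equiv.Perm.mul_apply, simplePerm_apply,
      simplePerm_apply]
    refine Prod.ext ?_ ?_
    · simp only [pow_succ', mul_inv_rev, q, hinv]
      group
    · have hfirst : q * t * q⁻¹ = s j ↔ t = (s j * s i) ^ (2 * k) * s j := by
        rw [hconj, hq, mul_assoc, hsemi, ← mul_assoc, ← pow_add, two_mul]
      have hsecond : s j * (q * t * q⁻¹) * s j = s i ↔
          t = (s j * s i) ^ (2 * k + 1) * s j := by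
        have hj : s j * (q * t * q⁻¹) * s j = s i ↔ q * t * q⁻¹ = s j * s i * s j := by
          constructor <;> intro h
          · rw [← h]; simp [mul_assoc]
          · rw [h]; simp [mul_assoc]
        rw [hj, hconj, hq, mul_assoc, mul_assoc, hsemi, ← mul_assoc, ← mul_assoc, ← pow_succ,
          ← pow_add, two_mul, add_right_comm]
      rw [show 2 * (k + 1) = 2 * k + 1 + 1 by ring, Finset.sum_range_succ, Finset.sum_range_succ,
        if_congr hfirst rfl rfl, if_congr hsecond rfl rfl]
      ring

theorem isLiftable_simplePerm : M.IsLiftable cs.simplePerm := by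
  intro i j
  ext1 ⟨t, e⟩
  have hij : (s i * s j) ^ M i j = 1 := cs.simple_mul_simple_pow i j
  have hji : (s j * s i) ^ M i j = 1 := M.symmetric i j ▸ cs.simple_mul_simple_pow j i
  -- `(s j * s i) ^ r * s j` has period `M i j` in `r`, so every reflection is counted twice
  have hsum : ∑ r ∈ Finset.range (2 * M i j),
      (if t = (s j * s i) ^ r * s j then (1 : ZMod 2) else 0) = 0 := by
    rw [two_mul, Finset.sum_range_add]
    simp only [pow_add, hji, one_mul]
    exact CharTwo.add_self_eq_zero _
  rw [simplePerm_mul_pow_apply, hij, hsum]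
  simp

noncomputable def reflectionPerm : W →* Equiv.Perm (W × ZMod 2) :=
  cs.lift ⟨cs.simplePerm, cs.isLiftable_simplePerm⟩

theorem reflectionPerm_simple (i : B) : cs.reflectionPerm (s i) = cs.simplePerm i :=
  cs.lift_apply_simple _ i

theorem reflectionPerm_wordProd (ω : List B) (t : W) (e : ZMod 2) :
    cs.reflectionPerm (π ω) (t, e) = (π ω * t * (π ω)⁻¹, e + (ris ω).count t) := by
  induction ω generalizing t e with
  | nil => simp
  | cons i ω ih =>
    have hcond : π ω * t * (π ω)⁻¹ = s i ↔ (π ω)⁻¹ * s i * π ω = t := by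
      constructor <;> intro h
      · rw [← h]; group
      · rw [← h]; group
    rw [wordProd_cons, map_mul, Equiv.Perm.mul_apply, ih, reflectionPerm_simple,
      simplePerm_apply, if_congr hcond rfl rfl]
    refine Prod.ext ?_ ?_
    · simp only [mul_inv_rev, inv_simple]
      group
    · simp only [rightInvSeq, count_cons, beq_iff_eq]
      split_ifs <;> push_cast <;> ring

noncomputable def inversionParity (w t : W) : ZMod 2 := (cs.reflectionPerm w (t, 0)).2

theorem inversionParity_wordProd (ω : List B) (t : W) :
    cs.inversionParity (π ω) t = (ris ω).count t := by
  rw [inversionParity, reflectionPerm_wordProd, zero_add]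

end ReflectionCocycle

theorem reflectionPerm_apply (w t : W) (e : ZMod 2) :
    cs.reflectionPerm w (t, e) = (w * t * w⁻¹, e + cs.inversionParity w t) := by
  obtain ⟨ω, -, rfl⟩ := cs.exists_isReduced w
  rw [inversionParity_wordProd, reflectionPerm_wordProd]

theorem inversionParity_one (t : W) : cs.inversionParity 1 t = 0 := by
  rw [inversionParity, map_one, Equiv.Perm.one_apply]

theorem inversionParity_mul (v w t : W) :
    cs.inversionParity (v * w) t =
      cs.inversionParity w t + cs.inversionParity v (w * t * w⁻¹) := by
  rw [inversionParity, map_mul, Equiv.Perm.mul_apply, reflectionPerm_apply cs w, zero_add,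
    reflectionPerm_apply]

theorem inversionParity_self {t : W} (ht : cs.IsReflection t) : cs.inversionParity t t = 1 := by
  obtain ⟨v, i, rfl⟩ := ht
  have hsimple : cs.inversionParity (s i) (s i) = 1 := by
    rw [inversionParity, reflectionPerm_simple, simplePerm_apply, if_pos rfl, zero_add]
  -- the contributions of `v` and `v⁻¹` to the parity of `v * s i * v⁻¹` cancel
  have hinv := cs.inversionParity_mul v v⁻¹ (v * s i * v⁻¹)
  rw [mul_inv_cancel, inversionParity_one] at hinv
  simp only [inversionParity_mul, inv_inv, mul_assoc, inv_mul_cancel_left, inv_mul_cancel,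
    mul_inv_cancel, mul_one] at hinv ⊢
  rw [hsimple]
  linear_combination -hinv

theorem inversionParity_mul_self (w : W) {t : W} (ht : cs.IsReflection t) :
    cs.inversionParity (w * t) t = cs.inversionParity w t + 1 := by
  rw [inversionParity_mul, inversionParity_self cs ht, mul_inv_cancel_right, add_comm]

theorem mem_rightInvSeq_of_inversionParity_eq_one {ω : List B} {t : W}
    (h : cs.inversionParity (π ω) t = 1) : t ∈ ris ω := by
  classical
  rw [inversionParity_wordProd] at h
  by_contra hmem
  simp [count_eq_zero_of_not_mem hmem] at h

theorem length_mul_lt_of_inversionParity_eq_one {w t : W} (h : cs.inversionParity w t = 1) :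
    ℓ (w * t) < ℓ w := by
  obtain ⟨ω, hω, rfl⟩ := cs.exists_isReduced w
  exact (cs.isRightInversion_of_mem_rightInvSeq hω
    (cs.mem_rightInvSeq_of_inversionParity_eq_one h)).2

theorem inversionParity_eq_one_of_length_mul_lt {w t : W} (ht : cs.IsReflection t)
    (h : ℓ (w * t) < ℓ w) : cs.inversionParity w t = 1 := by
  -- otherwise the parity at `w * t` is `1`, so `w = w * t * t` is shorter than `w * t`
  by_contra hne
  have hzero : cs.inversionParity w t = 0 := by
    generalize cs.inversionParity w t = x at hne; revert x; decide
  have := cs.length_mul_lt_of_inversionParity_eq_one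
    (by rw [inversionParity_mul_self cs w ht, hzero, zero_add] : cs.inversionParity (w * t) t = 1)
  rw [mul_assoc, ht.mul_self, mul_one] at this
  omega

theorem mem_rightInvSeq_of_length_mul_lt {ω : List B} {t : W} (ht : cs.IsReflection t)
    (h : ℓ (π ω * t) < ℓ (π ω)) : t ∈ ris ω :=
  cs.mem_rightInvSeq_of_inversionParity_eq_one (cs.inversionParity_eq_one_of_length_mul_lt ht h)

theorem exists_wordProd_eraseIdx_eq_mul {ω : List B} {t : W} (ht : cs.IsReflection t)
    (h : ℓ (π ω * t) < ℓ (π ω)) : ∃ j < ω.length, π (ω.eraseIdx j) = π ω * t := by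
  obtain ⟨j, hj, rfl⟩ := mem_iff_getElem.mp (cs.mem_rightInvSeq_of_length_mul_lt ht h)
  refine ⟨j, by simpa using hj, ?_⟩
  rw [← wordProd_mul_getD_rightInvSeq, getD_eq_getElem]

theorem exists_isReduced_sublist (ω : List B) :
    ∃ ω' : List B, ω' <+ ω ∧ cs.IsReduced ω' ∧ π ω' = π ω := by
  induction ω using List.reverseRecOn with
  | nil => exact ⟨[], Sublist.refl _, by simp [IsReduced], rfl⟩
  | append_singleton ρ i ih =>
    obtain ⟨ρ', hsub, hred, hπ⟩ := ih
    have hπ' : π (ρ ++ [i]) = π ρ' * s i := by rw [wordProd_append, wordProd_singleton, hπ]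
    rcases cs.length_mul_simple (π ρ') i with hup | hdown
    · refine ⟨ρ' ++ [i], hsub.append (Sublist.refl _), ?_, ?_⟩
      · rw [IsReduced, wordProd_append, wordProd_singleton, hup, hred, length_append,
          length_singleton]
      · rw [hπ', wordProd_append, wordProd_singleton]
    · obtain ⟨j, hj, hjπ⟩ :=
        cs.exists_wordProd_eraseIdx_eq_mul (ω := ρ') (cs.isReflection_simple i) (by omega)
      refine ⟨ρ'.eraseIdx j, (eraseIdx_sublist _ _).trans (hsub.trans (sublist_append_left _ _)),
        ?_, by rw [hjπ, hπ']⟩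
      rw [IsReduced, hjπ, length_eraseIdx_of_lt hj, ← hred]
      omega

variable {cs} in
theorem IsReduced.tail {i : B} {ω : List B} (hω : cs.IsReduced (i :: ω)) : cs.IsReduced ω := by
  simpa using hω.drop 1

variable {cs} in
theorem IsReduced.length_lt_simple_mul {i : B} {ω : List B} (hω : cs.IsReduced (i :: ω)) :
    ℓ (π ω) < ℓ (s i * π ω) := by
  rw [← wordProd_cons, hω, hω.tail, length_cons]
  exact Nat.lt_succ_self _

def ChainStep (x y : W) : Prop := ∃ t, cs.IsReflection t ∧ y = x * t ∧ ℓ x < ℓ y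

def ChainLE : W → W → Prop := Relation.ReflTransGen cs.ChainStep

noncomputable def leftMin (i : B) (x : W) : W := if ℓ (s i * x) < ℓ x then s i * x else x

noncomputable def leftMax (i : B) (x : W) : W := if ℓ (s i * x) < ℓ x then x else s i * x

variable {cs}

theorem ChainLE.refl (x : W) : cs.ChainLE x x := Relation.ReflTransGen.refl

theorem ChainLE.trans {x y z : W} (hxy : cs.ChainLE x y) (hyz : cs.ChainLE y z) :
    cs.ChainLE x z :=
  Relation.ReflTransGen.trans hxy hyz

theorem ChainLE.inv {x y : W} (h : cs.ChainLE x y) : cs.ChainLE x⁻¹ y⁻¹ := by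
  induction h with
  | refl => exact ChainLE.refl _
  | @tail b _ _ hstep ih =>
    obtain ⟨t, ht, rfl, hlt⟩ := hstep
    refine Relation.ReflTransGen.tail ih ⟨b * t * b⁻¹, ht.conj b, ?_, ?_⟩
    · rw [mul_inv_rev, ht.inv]; group
    · rwa [length_inv, length_inv]

variable (cs)

theorem chainLE_mul {x t : W} (ht : cs.IsReflection t) (h : ℓ x < ℓ (x * t)) :
    cs.ChainLE x (x * t) :=
  Relation.ReflTransGen.single ⟨t, ht, rfl, h⟩

theorem chainLE_mul_left {x t : W} (ht : cs.IsReflection t) (h : ℓ x < ℓ (t * x)) :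
    cs.ChainLE x (t * x) := by
  have hconj : t * x = x * (x⁻¹ * t * x) := by group
  rw [hconj] at h ⊢
  exact cs.chainLE_mul (by simpa using ht.conj x⁻¹) h

theorem chainLE_simple_mul {x : W} (i : B) (h : ℓ x < ℓ (s i * x)) : cs.ChainLE x (s i * x) :=
  cs.chainLE_mul_left (cs.isReflection_simple i) h

theorem chainLE_simple_mul_of_lt {x : W} (i : B) (h : ℓ (s i * x) < ℓ x) :
    cs.ChainLE (s i * x) x := by
  simpa using cs.chainLE_simple_mul i (x := s i * x) (by simpa using h)

theorem chainLE_simple_mul_mul_or_eq (i : B) {v t : W} (ht : cs.IsReflection t)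
    (hvt : ℓ v < ℓ (v * t)) : cs.ChainLE (s i * v) (s i * v * t) ∨ s i * v * t = v := by
  rcases lt_or_gt_of_ne (ht.length_mul_left_ne (s i * v)) with hdown | hup
  · right
    rcases cs.length_simple_mul v i with hsv | hsv
    · obtain ⟨ω, hω, rfl⟩ := cs.exists_isReduced v
      obtain ⟨j, hj, hjπ⟩ := cs.exists_wordProd_eraseIdx_eq_mul (ω := i :: ω) ht
        (by rwa [wordProd_cons])
      rw [wordProd_cons] at hjπ
      cases j with
      | zero => exact hjπ.symm
      | succ j =>
        rw [eraseIdx_cons_succ, wordProd_cons, mul_assoc, mul_right_inj] at hjπ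
        have := cs.length_wordProd_le (ω.eraseIdx j)
        rw [length_eraseIdx_of_lt (by simpa using hj), hjπ, ← hω] at this
        omega
    · have := cs.length_simple_mul (v * t) i
      rw [← mul_assoc] at this
      omega
  · exact .inl (cs.chainLE_mul ht hup)

theorem chainLE_leftMin_leftMax_of_chainStep (i : B) {v w : W} (h : cs.ChainStep v w) :
    cs.ChainLE (cs.leftMin i v) (cs.leftMin i w) ∧
      cs.ChainLE (cs.leftMax i v) (cs.leftMax i w) := by
  obtain ⟨t, ht, rfl, hvt⟩ := h
  have hstep : cs.ChainLE v (v * t) := cs.chainLE_mul ht hvt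
  have hup (x : W) (hx : ¬ ℓ (s i * x) < ℓ x) : cs.ChainLE x (s i * x) :=
    cs.chainLE_simple_mul i ((not_lt.1 hx).lt_of_ne (cs.length_simple_mul_ne x i).symm)
  rcases cs.chainLE_simple_mul_mul_or_eq i ht hvt with hs | heq
  · rw [mul_assoc] at hs
    unfold leftMin leftMax
    split_ifs with hv hw hw
    · exact ⟨hs, hstep⟩
    · exact ⟨(cs.chainLE_simple_mul_of_lt i hv).trans hstep, hstep.trans (hup _ hw)⟩
    · exact ⟨(hup _ hv).trans hs, hs.trans (cs.chainLE_simple_mul_of_lt i hw)⟩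
    · exact ⟨hstep, hs⟩
  · have hvt' : v * t = s i * v := by
      apply mul_left_cancel (a := s i)
      rw [← mul_assoc, heq, simple_mul_simple_cancel_left]
    rw [mul_assoc] at heq
    have hw : ℓ (s i * (v * t)) < ℓ (v * t) := by rwa [heq]
    have hv : ¬ ℓ (s i * v) < ℓ v := by rw [← hvt']; omega
    have hmin : cs.leftMin i (v * t) = cs.leftMin i v := by
      rw [leftMin, leftMin, if_pos hw, if_neg hv, heq]
    have hmax : cs.leftMax i (v * t) = cs.leftMax i v := by
      rw [leftMax, leftMax, if_pos hw, if_neg hv, hvt']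
    rw [hmin, hmax]
    exact ⟨ChainLE.refl _, ChainLE.refl _⟩

variable {cs}

/-- Deodhar's lifting property. -/
theorem ChainLE.leftMin_leftMax {u w : W} (i : B) (h : cs.ChainLE u w) :
    cs.ChainLE (cs.leftMin i u) (cs.leftMin i w) ∧
      cs.ChainLE (cs.leftMax i u) (cs.leftMax i w) := by
  induction h with
  | refl => exact ⟨ChainLE.refl _, ChainLE.refl _⟩
  | tail _ hstep ih =>
    obtain ⟨hmin, hmax⟩ := cs.chainLE_leftMin_leftMax_of_chainStep i hstep
    exact ⟨ih.1.trans hmin, ih.2.trans hmax⟩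

theorem ChainLE.simple_mul {u w : W} (i : B) (hw : ℓ w < ℓ (s i * w)) (h : cs.ChainLE u w) :
    cs.ChainLE (s i * u) (s i * w) := by
  have hmax := (h.leftMin_leftMax i).2
  rw [show cs.leftMax i w = s i * w from if_neg hw.not_gt] at hmax
  refine .trans ?_ hmax
  unfold leftMax
  split_ifs with hu
  · exact cs.chainLE_simple_mul_of_lt i hu
  · exact ChainLE.refl _

theorem ChainLE.mul_simple {u w : W} (i : B) (hw : ℓ w < ℓ (w * s i)) (h : cs.ChainLE u w) :
    cs.ChainLE (u * s i) (w * s i) := by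
  have hinv (x : W) : (x * s i)⁻¹ = s i * x⁻¹ := by rw [mul_inv_rev, inv_simple]
  have h' := (h.inv.simple_mul i (by rwa [← hinv, length_inv, length_inv])).inv
  rwa [← hinv, ← hinv, inv_inv, inv_inv] at h'

theorem ChainLE.leftMin_le_simple_mul {u w : W} (i : B) (hw : ℓ (s i * w) < ℓ w)
    (h : cs.ChainLE u w) : cs.ChainLE (cs.leftMin i u) (s i * w) := by
  have hmin := (h.leftMin_leftMax i).1
  rwa [show cs.leftMin i w = s i * w from if_pos hw] at hmin

theorem ChainLE.exists_sublist {u w : W} (h : cs.ChainLE u w) {ω : List B}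
    (hω : cs.IsReduced ω) (hπ : π ω = w) : ∃ ν : List B, ν <+ ω ∧ π ν = u := by
  induction h generalizing ω with
  | refl => exact ⟨ω, Sublist.refl _, hπ⟩
  | tail _ hstep ih =>
    obtain ⟨t, ht, rfl, hlt⟩ := hstep
    obtain ⟨j, -, hj⟩ := cs.exists_wordProd_eraseIdx_eq_mul (ω := ω) ht
      (by rwa [hπ, mul_assoc, ht.mul_self, mul_one])
    obtain ⟨ω', hsub, hω', hπ'⟩ := cs.exists_isReduced_sublist (ω.eraseIdx j)
    obtain ⟨ν, hν, rfl⟩ := ih hω' (by rw [hπ', hj, hπ, mul_assoc, ht.mul_self, mul_one])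
    exact ⟨ν, hν.trans (hsub.trans (eraseIdx_sublist ω j)), rfl⟩

theorem ChainLE.lift_simple_mul_mul_simple_of_isLeftDescent {y v : W} (i j : B)
    (hv : cs.IsLeftDescent v i) (hvj : ℓ (s i * v) < ℓ (s i * v * s j)) (h : cs.ChainLE y v) :
    cs.ChainLE y (s i * v * s j) ∨
      cs.ChainLE (s i * y * s j) (s i * v * s j) ∧ ℓ (s i * y * s j) ≤ ℓ y := by
  have hmin := h.leftMin_le_simple_mul i hv
  unfold leftMin at hmin
  split_ifs at hmin with hy
  · have := cs.length_mul_simple (s i * y) j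
    exact .inr ⟨hmin.mul_simple j hvj, by omega⟩
  · exact .inl (hmin.trans (cs.chainLE_mul (cs.isReflection_simple j) hvj))

theorem ChainLE.lift_simple_mul_mul_simple {y v : W} (i j : B)
    (hv : ℓ v ≤ ℓ (s i * v * s j)) (h : cs.ChainLE y v) :
    cs.ChainLE y (s i * v * s j) ∨
      cs.ChainLE (s i * y * s j) (s i * v * s j) ∧ ℓ (s i * y * s j) ≤ ℓ y := by
  by_cases hvi : cs.IsLeftDescent v i
  · have := cs.length_mul_simple (s i * v) j
    exact h.lift_simple_mul_mul_simple_of_isLeftDescent i j hvi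
      (by unfold IsLeftDescent at hvi; omega)
  by_cases hvj : cs.IsRightDescent v j
  · -- a right descent of `v` is a left descent of `v⁻¹`
    have hinv (x : W) : (s j * x⁻¹ * s i)⁻¹ = s i * x * s j := by
      simp only [mul_inv_rev, inv_simple, inv_inv, mul_assoc]
    have hvj' : cs.IsLeftDescent v⁻¹ j := cs.isLeftDescent_inv_iff.mpr hvj
    have hlen : ℓ (s j * v⁻¹) < ℓ (s j * v⁻¹ * s i) := by
      have := hvj'
      rw [IsLeftDescent, length_inv] at this
      rw [← length_inv _ (s j * v⁻¹ * s i), hinv]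
      omega
    rcases h.inv.lift_simple_mul_mul_simple_of_isLeftDescent j i hvj' hlen with h' | ⟨h', hlen'⟩
    · exact .inl (by simpa only [inv_inv, hinv] using h'.inv)
    · refine .inr ⟨by simpa only [hinv] using h'.inv, ?_⟩
      rwa [← hinv, length_inv, ← length_inv _ y]
  · have hvi' := cs.not_isLeftDescent_iff.mp hvi
    have hvj' := cs.not_isRightDescent_iff.mp hvj
    rcases cs.chainLE_simple_mul_mul_or_eq i (cs.isReflection_simple j) (by omega : ℓ v < _)
      with hs | heq
    · exact .inl (h.trans ((cs.chainLE_simple_mul i (by omega)).trans hs))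
    · exact .inl (by rwa [heq])

variable (cs)

theorem chainLE_wordProd_of_sublist {ω ν : List B} (hω : cs.IsReduced ω) (h : ν <+ ω) :
    cs.ChainLE (π ν) (π ω) := by
  induction h with
  | slnil => exact ChainLE.refl _
  | cons i _ ih =>
    rw [wordProd_cons]
    exact (ih hω.tail).trans (cs.chainLE_simple_mul i hω.length_lt_simple_mul)
  | cons_cons i _ ih =>
    rw [wordProd_cons, wordProd_cons]
    exact (ih hω.tail).simple_mul i hω.length_lt_simple_mul

theorem bruhatLE_iff_chainLE {x w : W} : cs.bruhatLE x w ↔ cs.ChainLE x w := by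
  constructor
  · rintro ⟨ω, rfl, hω, ν, hsub, rfl⟩
    exact cs.chainLE_wordProd_of_sublist hω hsub
  · intro h
    obtain ⟨ω, hω, rfl⟩ := cs.exists_isReduced w
    obtain ⟨ν, hsub, hν⟩ := h.exists_sublist hω rfl
    exact ⟨ω, rfl, hω, ν, hsub, hν⟩

theorem sigmaConj_simple_mul_mul_simple (σ : W ≃* W) {i j : B} (hσ : σ (s i) = s j)
    {o y : W} (hy : sigmaConj σ y o) : sigmaConj σ (s i * y * s j) o := by
  obtain ⟨g, rfl⟩ := hy
  exact ⟨s i * g, by rw [map_mul, hσ, mul_inv_rev, inv_simple]; group⟩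

theorem exists_minLenIn_chainLE_of_sigmaStep (σ : W ≃* W)
    (hσ : ∀ i : B, ∃ j : B, σ (s i) = s j) {o a b : W} (hab : cs.sigmaStep σ a b)
    (hb : ∃ y, minLenIn cs σ o y ∧ cs.ChainLE y b) : ∃ y, minLenIn cs σ o y ∧ cs.ChainLE y a := by
  obtain ⟨i, rfl, hlen⟩ := hab
  obtain ⟨j, hj⟩ := hσ i
  obtain ⟨y, hy, hyb⟩ := hb
  rw [hj] at hlen hyb
  have ha : s i * (s i * a * s j) * s j = a := by
    simp only [mul_assoc, simple_mul_simple_cancel_left, simple_mul_simple_self, mul_one]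
  rcases hyb.lift_simple_mul_mul_simple i j (by rwa [ha]) with h | ⟨h, hyj⟩
  · exact ⟨y, hy, by rwa [ha] at h⟩
  · refine ⟨s i * y * s j, ⟨cs.sigmaConj_simple_mul_mul_simple σ hj hy.1, ?_⟩, by rwa [ha] at h⟩
    exact fun z hz ↦ hyj.trans (hy.2 z hz)

theorem exists_minLenIn_chainLE_of_reflTransGen (σ : W ≃* W)
    (hσ : ∀ i : B, ∃ j : B, σ (s i) = s j) {o x m : W} (hm : minLenIn cs σ o m)
    (h : Relation.ReflTransGen (cs.sigmaStep σ) x m) :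
    ∃ y, minLenIn cs σ o y ∧ cs.ChainLE y x := by
  induction h using Relation.ReflTransGen.head_induction_on with
  | refl => exact ⟨m, hm, ChainLE.refl m⟩
  | head hstep _ ih => exact cs.exists_minLenIn_chainLE_of_sigmaStep σ hσ hstep ih

end CoxeterSystem

/-- Corollary 2.9: for a σ-conjugacy class `O` (of `o`) satisfying the reduction property,
there is a minimal length element of `O` below `w` in Bruhat order iff there is any
element of `O` below `w`. -/
theorem preceq_iff_exists_le {B W : Type*} [Group W] {M : CoxeterMatrix B}
    (cs : CoxeterSystem M W) (σ : W ≃* W)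
    (hσ : ∀ i : B, ∃ j : B, σ (cs.simple i) = cs.simple j)
    (o : W)
    (hred : ∀ w : W, sigmaConj σ w o →
      ∃ w' : W, minLenIn cs σ o w' ∧ Relation.ReflTransGen (cs.sigmaStep σ) w w')
    (w : W) :
    (∃ x : W, minLenIn cs σ o x ∧ cs.bruhatLE x w) ↔
      (∃ x : W, sigmaConj σ x o ∧ cs.bruhatLE x w) := by
  refine ⟨fun ⟨x, hx, hxw⟩ ↦ ⟨x, hx.1, hxw⟩, fun ⟨x, hx, hxw⟩ ↦ ?_⟩
  obtain ⟨m, hm, hxm⟩ := hred x hx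
  obtain ⟨y, hy, hyx⟩ := cs.exists_minLenIn_chainLE_of_reflTransGen σ hσ hm hxm
  exact ⟨y, hy, cs.bruhatLE_iff_chainLE.2 (hyx.trans (cs.bruhatLE_iff_chainLE.1 hxw))⟩
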